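/- arXiv:2008.09578 — 3 statements merged into one kernel-verified Lean document; each statement's English description precedes it below -/
import Mathlib

section
/- For m ∈ (-1/(3√3), 0], the largest positive root r_m of x^3 - x - 2m satisfies r_m > (-m)^{1/3}. -/
/-- For m ∈ (-1/(3√3), 0], the largest positive root r_m of x^3 - x - 2m
satisfies r_m > (-m)^{1/3}, i.e. r_m^3 + m > 0. -/
theorem stmt_2 (m rm : ℝ)
    (hm1 : -1 / (3 * Real.sqrt 3) < m) (hm2 : m ≤ 0)
    (hrm_pos : 0 < rm) (hrm_root : rm ^ 3 - rm - 2 * m = 0)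
    (hrm_max : ∀ x : ℝ, 0 < x → x ^ 3 - x - 2 * m = 0 → x ≤ rm) :
    (-m) ^ ((1 : ℝ) / 3) < rm ∧ 0 < rm ^ 3 + m := by
  have hs : Real.sqrt 3 > 0 := Real.sqrt_pos.mpr (by norm_num)
  have hs2 : Real.sqrt 3 ^ 2 = 3 := Real.sq_sqrt (by norm_num)
  have hs1 : (1:ℝ) ≤ Real.sqrt 3 := by nlinarith
  set a : ℝ := 1 / Real.sqrt 3 with ha
  have ha_pos : 0 < a := by positivity
  have ha1 : a ≤ 1 := by
    rw [ha, div_le_one hs]; exact hs1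
  have haq : a * Real.sqrt 3 = 1 := by rw [ha]; field_simp
  have hm1' : -1 < 3 * Real.sqrt 3 * m := by
    rw [div_lt_iff₀ (by nlinarith : (0:ℝ) < 3 * Real.sqrt 3)] at hm1
    nlinarith
  set f : ℝ → ℝ := fun x => x ^ 3 - x - 2 * m with hf
  have hfa : f a ≤ 0 := by
    have h3 : a ^ 3 = 1 / (3 * Real.sqrt 3) := by
      rw [ha]; field_simp; nlinarith
    have h4 : (1 / (3 * Real.sqrt 3)) * (3 * Real.sqrt 3) = 1 := by
      field_simp
    simp only [hf, h3]
    nlinarith [mul_pos hs hs]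
  have hfb : 0 ≤ f 1 := by simp only [hf]; nlinarith
  have hcont : ContinuousOn f (Set.Icc a 1) := by fun_prop
  have hIVT := intermediate_value_Icc ha1 hcont
  have h0 : (0:ℝ) ∈ Set.Icc (f a) (f 1) := ⟨hfa, hfb⟩
  obtain ⟨x, hx, hfx⟩ := hIVT h0
  have hxpos : 0 < x := lt_of_lt_of_le ha_pos hx.1
  have hxrm : x ≤ rm := hrm_max x hxpos hfx
  have harm : a ≤ rm := le_trans hx.1 hxrm
  have hm3 : -3 * m < a := by
    rw [ha]
    rw [div_lt_iff₀ (by nlinarith : (0:ℝ) < 3 * Real.sqrt 3)] at hm1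
    rw [lt_div_iff₀ hs]
    nlinarith
  have hkey : -m < rm ^ 3 := by nlinarith
  have h2 : 0 < rm ^ 3 + m := by linarith
  refine ⟨?_, h2⟩
  have := Real.rpow_lt_rpow (by linarith : (0:ℝ) ≤ -m) hkey (by norm_num : (0:ℝ) < 1/3)
  calc (-m) ^ ((1:ℝ)/3) < (rm ^ 3) ^ ((1:ℝ)/3) := this
    _ = rm := by
        rw [← Real.rpow_natCast rm 3, ← Real.rpow_mul hrm_pos.le]
        norm_num
end

section
/- On a Riemannian 3-manifold, if u satisfies Δu = 3u and Ψ is a positive function with ∇Ψ = (uΨ^2/(Ψ^3 + m))∇u, then div(∇u/(Ψ^3+m)) = (3uΨ^4/(Ψ^3+m)^3)·((Ψ^3+m)^2/Ψ^4 - |∇u|^2). -/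
open scoped RealInnerProductSpace

noncomputable section

local notation "E" => EuclideanSpace ℝ (Fin 3)

/-- Divergence of a vector field on Euclidean 3-space. -/
def ediv (V : E → E) (x : E) : ℝ :=
  ∑ i : Fin 3, fderiv ℝ V x (EuclideanSpace.single i 1) i

/-- Laplace–Beltrami operator on Euclidean 3-space. -/
def lap (f : E → ℝ) (x : E) : ℝ :=
  ediv (fun y => gradient f y) x

lemma fderiv_apply_eq_inner_gradient (f : E → ℝ) (x v : E) :
    fderiv ℝ f x v = ⟪gradient f x, v⟫ := by
  rw [gradient, InnerProductSpace.toDual_symm_apply]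

/-- If u satisfies Δu = 3u and Ψ > 0 is a function with
∇Ψ = (uΨ²/(Ψ³+m))∇u and Ψ³ + m ≠ 0, then
div(∇u/(Ψ³+m)) = (3uΨ⁴/(Ψ³+m)³)·((Ψ³+m)²/Ψ⁴ - |∇u|²). -/
theorem stmt_9 (m : ℝ) (u Ψ : E → ℝ)
    (hu : ContDiff ℝ 2 u) (hΨ : ContDiff ℝ 1 Ψ)
    (hΨpos : ∀ x, 0 < Ψ x)
    (hΨm : ∀ x, Ψ x ^ 3 + m ≠ 0)
    (hlap : ∀ x, lap u x = 3 * u x)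
    (hgradΨ : ∀ x, gradient Ψ x = (u x * Ψ x ^ 2 / (Ψ x ^ 3 + m)) • gradient u x) :
    ∀ x : E,
      ediv (fun y => (Ψ y ^ 3 + m)⁻¹ • gradient u y) x =
        3 * u x * Ψ x ^ 4 / (Ψ x ^ 3 + m) ^ 3 *
          ((Ψ x ^ 3 + m) ^ 2 / Ψ x ^ 4 - ⟪gradient u x, gradient u x⟫) := by
  intro x
  have hΨd : Differentiable ℝ Ψ := hΨ.differentiable one_ne_zero
  have hc : Ψ x ^ 3 + m ≠ 0 := hΨm x
  have hΨ0 : Ψ x ≠ 0 := (hΨpos x).ne'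
  have hA : HasFDerivAt (fun y => (Ψ y ^ 3 + m)⁻¹)
      ((-(3 * Ψ x ^ 2) / (Ψ x ^ 3 + m) ^ 2) • fderiv ℝ Ψ x) x := by
    have h1 : HasDerivAt (fun t : ℝ => (t ^ 3 + m)⁻¹)
        (-(3 * Ψ x ^ 2) / (Ψ x ^ 3 + m) ^ 2) (Ψ x) := by
      have := ((hasDerivAt_pow 3 (Ψ x)).add_const m).inv hc
      norm_num at this ⊢
      exact this
    exact h1.comp_hasFDerivAt x (hΨd x).hasFDerivAt
  have hgu : DifferentiableAt ℝ (fun y => gradient u y) x := by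
    have h : ContDiff ℝ 1 (fderiv ℝ u) := hu.fderiv_right (by norm_num)
    exact ((InnerProductSpace.toDual ℝ
      (EuclideanSpace ℝ (Fin 3))).symm.differentiable.differentiableAt).comp x
      (h.differentiable one_ne_zero x)
  have key : fderiv ℝ (fun y => (Ψ y ^ 3 + m)⁻¹ • gradient u y) x
      = (Ψ x ^ 3 + m)⁻¹ • fderiv ℝ (fun y => gradient u y) x
        + ((-(3 * Ψ x ^ 2) / (Ψ x ^ 3 + m) ^ 2) • fderiv ℝ Ψ x).smulRight (gradient u x) := by
    rw [fderiv_fun_smul hA.differentiableAt hgu, hA.fderiv]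
  have hΨi : ∀ v : E, fderiv ℝ Ψ x v
      = (u x * Ψ x ^ 2 / (Ψ x ^ 3 + m)) * ⟪gradient u x, v⟫ := by
    intro v
    rw [fderiv_apply_eq_inner_gradient, hgradΨ x, real_inner_smul_left]
  have hl := hlap x
  unfold lap ediv at hl
  unfold ediv
  have hgi : ∀ i : Fin 3, ⟪gradient u x, EuclideanSpace.single i (1:ℝ)⟫ = gradient u x i := by
    intro i
    rw [EuclideanSpace.inner_single_right]; simp
  simp only [key, ContinuousLinearMap.add_apply, ContinuousLinearMap.coe_smul', Pi.smul_apply,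
    ContinuousLinearMap.smulRight_apply, PiLp.add_apply, PiLp.smul_apply, smul_eq_mul,
    ContinuousLinearMap.smul_apply, hΨi, hgi]
  rw [Finset.sum_add_distrib, ← Finset.mul_sum, hl]
  have hsum : ∑ i : Fin 3, (-(3 * Ψ x ^ 2) / (Ψ x ^ 3 + m) ^ 2 *
        (u x * Ψ x ^ 2 / (Ψ x ^ 3 + m) * gradient u x i)) * gradient u x i
      = (-(3 * Ψ x ^ 2) / (Ψ x ^ 3 + m) ^ 2 * (u x * Ψ x ^ 2 / (Ψ x ^ 3 + m)))
        * ⟪gradient u x, gradient u x⟫ := by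
    have : ⟪gradient u x, gradient u x⟫ = ∑ i : Fin 3, gradient u x i * gradient u x i := by
      rw [PiLp.inner_apply]; simp [RCLike.inner_apply, sq]
    rw [this, Finset.mul_sum]
    exact Finset.sum_congr rfl fun i _ => by ring
  rw [hsum]
  field_simp
  ring

end
end

section
/- The map m ↦ k(m) = (3 r_m^2 - 1)/(2 r_m) from masses m ∈ (-1/(3√3), 0] to surface gravities is a strictly increasing bijection onto (0, 1]; in particular, for each k ∈ (0,1] there is exactly one m_0 ≤ 0 with surface gravity k. -/
/-- cube monotonicity on the region `3x² > 1`, `x > 0` -/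
lemma cube_lt {a b : ℝ} (ha : 1 < 3 * a ^ 2) (hb : 1 < 3 * b ^ 2)
    (ha0 : 0 < a) (hb0 : 0 < b) (h : a < b) : a ^ 3 - a < b ^ 3 - b := by
  nlinarith [mul_pos ha0 hb0, sq_nonneg (a + b), sq_nonneg (a - b)]

lemma cube_inj {a b : ℝ} (ha : 1 < 3 * a ^ 2) (hb : 1 < 3 * b ^ 2)
    (ha0 : 0 < a) (hb0 : 0 < b) (h : a ^ 3 - a = b ^ 3 - b) : a = b := by
  rcases lt_trichotomy a b with h' | h' | h'
  · exact absurd h (ne_of_lt (cube_lt ha hb ha0 hb0 h'))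
  · exact h'
  · exact absurd h.symm (ne_of_lt (cube_lt hb ha hb0 ha0 h'))

set_option maxHeartbeats 1600000 in
/-- The map m ↦ k(m) = (3 r_m² - 1)/(2 r_m) from masses m ∈ (-1/(3√3), 0] to
surface gravities is strictly increasing and a bijection onto (0, 1]; in
particular, for each k ∈ (0,1] there is exactly one mass m₀ with surface
gravity k.  Here r_m is the largest positive root of x³ - x - 2m. -/
theorem stmt_15 (rm : ℝ → ℝ)
    (hrm : ∀ m ∈ Set.Ioc (-1 / (3 * Real.sqrt 3)) (0 : ℝ),
      0 < rm m ∧ (rm m) ^ 3 - rm m - 2 * m = 0 ∧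
        ∀ x : ℝ, 0 < x → x ^ 3 - x - 2 * m = 0 → x ≤ rm m) :
    StrictMonoOn (fun m => (3 * (rm m) ^ 2 - 1) / (2 * rm m))
      (Set.Ioc (-1 / (3 * Real.sqrt 3)) (0 : ℝ)) ∧
    (fun m => (3 * (rm m) ^ 2 - 1) / (2 * rm m)) ''
        Set.Ioc (-1 / (3 * Real.sqrt 3)) (0 : ℝ) = Set.Ioc 0 1 ∧
    ∀ k ∈ Set.Ioc (0 : ℝ) 1, ∃! m, m ∈ Set.Ioc (-1 / (3 * Real.sqrt 3)) (0 : ℝ) ∧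
      (3 * (rm m) ^ 2 - 1) / (2 * rm m) = k := by
  set s := Real.sqrt 3 with hsdef
  have hs0 : 0 < s := Real.sqrt_pos.mpr (by norm_num)
  have hs2 : s ^ 2 = 3 := Real.sq_sqrt (by norm_num)
  have hlb : -1 / (3 * s) = -s / 9 := by
    rw [div_eq_div_iff (by positivity) (by norm_num)]; nlinarith
  -- Key properties of rm m
  have key : ∀ m ∈ Set.Ioc (-1 / (3 * s)) (0 : ℝ),
      s / 3 < rm m ∧ rm m ≤ 1 ∧ (rm m) ^ 3 - rm m = 2 * m := by
    intro m hm
    obtain ⟨hpos, hroot, hmax⟩ := hrm m hm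
    obtain ⟨hm1, hm2⟩ := hm
    rw [hlb] at hm1
    have hroot' : (rm m) ^ 3 - rm m = 2 * m := by linarith
    have hfa : (s / 3) ^ 3 - (s / 3) - 2 * m < 0 := by nlinarith
    have hfb : (0 : ℝ) ≤ (2 : ℝ) ^ 3 - 2 - 2 * m := by nlinarith
    have hcont : ContinuousOn (fun x : ℝ => x ^ 3 - x - 2 * m) (Set.Icc (s / 3) 2) := by
      fun_prop
    have hab : s / 3 ≤ 2 := by nlinarith
    have := intermediate_value_Icc hab hcont ⟨le_of_lt hfa, hfb⟩
    obtain ⟨x, hxmem, hxroot⟩ := this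
    have hx1 : s / 3 ≤ x := hxmem.1
    have hxpos : 0 < x := lt_of_lt_of_le (by positivity) hx1
    have hxle : x ≤ rm m := hmax x hxpos hxroot
    have hxne : s / 3 < x := by
      rcases lt_or_eq_of_le hx1 with h | h
      · exact h
      · exfalso; rw [← h] at hxroot; simp at hxroot; linarith
    refine ⟨lt_of_lt_of_le hxne hxle, ?_, hroot'⟩
    by_contra h
    push_neg at h
    nlinarith [hroot', mul_pos (mul_pos (sub_pos.mpr h) hpos) (by linarith : (0:ℝ) < rm m + 1)]
  -- rm m has 1 < 3 (rm m)^2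
  have key2 : ∀ m ∈ Set.Ioc (-1 / (3 * s)) (0 : ℝ), 1 < 3 * (rm m) ^ 2 := by
    intro m hm
    have := (key m hm).1
    nlinarith
  -- strict monotonicity
  have hmono : StrictMonoOn (fun m => (3 * (rm m) ^ 2 - 1) / (2 * rm m))
      (Set.Ioc (-1 / (3 * s)) (0 : ℝ)) := by
    intro m1 h1 m2 h2 h12
    obtain ⟨r1lb, r1ub, r1eq⟩ := key m1 h1
    obtain ⟨r2lb, r2ub, r2eq⟩ := key m2 h2
    have h1' := key2 m1 h1
    have h2' := key2 m2 h2
    have r1pos : 0 < rm m1 := lt_of_lt_of_le (by positivity) (le_of_lt r1lb)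
    have r2pos : 0 < rm m2 := lt_of_lt_of_le (by positivity) (le_of_lt r2lb)
    have hr12 : rm m1 < rm m2 := by
      by_contra h
      push_neg at h
      rcases lt_or_eq_of_le h with h | h
      · have := cube_lt h2' h1' r2pos r1pos h; linarith
      · rw [h] at r2eq; linarith
    show (3 * (rm m1) ^ 2 - 1) / (2 * rm m1) < (3 * (rm m2) ^ 2 - 1) / (2 * rm m2)
    rw [div_lt_div_iff₀ (by positivity) (by positivity)]
    nlinarith [mul_pos r1pos r2pos]
  -- values lie in (0, 1]
  have hval : ∀ m ∈ Set.Ioc (-1 / (3 * s)) (0 : ℝ),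
      (3 * (rm m) ^ 2 - 1) / (2 * rm m) ∈ Set.Ioc (0 : ℝ) 1 := by
    intro m hm
    obtain ⟨rlb, rub, req⟩ := key m hm
    have h1 := key2 m hm
    have rpos : 0 < rm m := lt_of_lt_of_le (by positivity) (le_of_lt rlb)
    constructor
    · exact div_pos (by linarith) (by positivity)
    · rw [div_le_one (by positivity)]
      nlinarith
  -- surjectivity: for each k ∈ (0,1] there is m in the domain hitting k
  have hsurj : ∀ k ∈ Set.Ioc (0 : ℝ) 1, ∃ m ∈ Set.Ioc (-1 / (3 * s)) (0 : ℝ),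
      (3 * (rm m) ^ 2 - 1) / (2 * rm m) = k := by
    intro k hk
    obtain ⟨hk0, hk1⟩ := hk
    set w := Real.sqrt (k ^ 2 + 3) with hwdef
    have hw0 : 0 < w := Real.sqrt_pos.mpr (by positivity)
    have hw2 : w ^ 2 = k ^ 2 + 3 := Real.sq_sqrt (by positivity)
    set r := (k + w) / 3 with hrdef
    have hws : s < w := by nlinarith
    have hrlb : s / 3 < r := by rw [hrdef]; nlinarith
    have hrpos : 0 < r := lt_of_lt_of_le (by positivity) (le_of_lt hrlb)
    have hwle : w ≤ 2 := by nlinarith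
    have hrub : r ≤ 1 := by rw [hrdef]; nlinarith
    set m := (r ^ 3 - r) / 2 with hmdef
    have hm2 : m ≤ 0 := by
      rw [hmdef]
      nlinarith [mul_nonneg (mul_nonneg hrpos.le (by linarith : (0:ℝ) ≤ 1 - r))
        (by linarith : (0:ℝ) ≤ 1 + r)]
    have hsr : 1 < s * r := by nlinarith
    have hm1 : -1 / (3 * s) < m := by
      rw [hlb, hmdef]
      have h3 : 0 < (s * r - 1) ^ 2 * (s * r + 2) :=
        mul_pos (pow_pos (by linarith) 2) (by linarith)
      nlinarith
    have hmem : m ∈ Set.Ioc (-1 / (3 * s)) (0 : ℝ) := ⟨hm1, hm2⟩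
    obtain ⟨hpos, hroot, hmax⟩ := hrm m hmem
    obtain ⟨rlb, rub, req⟩ := key m hmem
    have hrroot : r ^ 3 - r - 2 * m = 0 := by rw [hmdef]; ring
    have hrle : r ≤ rm m := hmax r hrpos hrroot
    have h3r : 1 < 3 * r ^ 2 := by nlinarith
    have heq : rm m = r := by
      apply cube_inj (key2 m hmem) h3r (by linarith) hrpos
      rw [req]; linarith
    have hk_eq : 3 * r ^ 2 - 1 = k * (2 * r) := by
      rw [hrdef]; linear_combination (1/3 : ℝ) * hw2
    refine ⟨m, hmem, ?_⟩
    rw [heq, div_eq_iff (by positivity)]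
    exact hk_eq
  refine ⟨hmono, ?_, ?_⟩
  · ext k
    constructor
    · rintro ⟨m, hm, rfl⟩
      exact hval m hm
    · intro hk
      obtain ⟨m, hm, hv⟩ := hsurj k hk
      exact ⟨m, hm, hv⟩
  · intro k hk
    obtain ⟨m, hm, hv⟩ := hsurj k hk
    refine ⟨m, ⟨hm, hv⟩, ?_⟩
    rintro m' ⟨hm', hv'⟩
    rcases lt_trichotomy m' m with h | h | h
    · have h2 : (3 * (rm m') ^ 2 - 1) / (2 * rm m') <
          (3 * (rm m) ^ 2 - 1) / (2 * rm m) := hmono hm' hm h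
      rw [hv, hv'] at h2; linarith
    · exact h
    · have h2 : (3 * (rm m) ^ 2 - 1) / (2 * rm m) <
          (3 * (rm m') ^ 2 - 1) / (2 * rm m') := hmono hm hm' h
      rw [hv, hv'] at h2; linarith
end
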